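/- Let m, n be positive integers, b ∈ ℂ, b ≠ 0, and λ = Σ_{i=0}^{m} C(m,i)·(-1)^i/(n+m+1-i). Let P(z) = Σ_{i=0}^{m} C(m,i)·((-1)^i/(n+m+1-i))·z^{n+m+1-i}·b^i + c. Then P(b) - P(0) = b^{n+m+1}·λ and λ ≠ 0; in particular P(b) ≠ P(0). -/

import Mathlib

/-!
Writing `N = n + m + 1`, the polynomial part of `P` is homogeneous of degree `N` in `(z, b)`, so it
vanishes at `0` and equals `b ^ N * λ` at `b`. Expanding `(x - 1) ^ m` by the binomial theorem and
integrating term by term shows `λ = ∫₀¹ xⁿ (x - 1)ᵐ dx = (-1)ᵐ ∫₀¹ xⁿ (1 - x)ᵐ dx`, and the last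
integrand is positive on `(0, 1)`.
-/

open intervalIntegral Finset

lemma pow_mul_sub_one_pow_eq_sum {R : Type*} [CommRing R] (m n : ℕ) (x : R) :
    x ^ n * (x - 1) ^ m =
      ∑ i ∈ range (m + 1), (m.choose i : R) * (-1) ^ i * x ^ (n + m - i) := by
  rw [sub_eq_add_neg, add_pow, mul_sum, ← sum_range_reflect]
  refine sum_congr rfl fun i hi => ?_
  have hi : i ≤ m := Nat.lt_succ_iff.mp (mem_range.mp hi)
  rw [show m + 1 - 1 - i = m - i by omega, Nat.sub_sub_self hi, Nat.choose_symm hi,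
    show n + m - i = n + (m - i) by omega, pow_add]
  ring

lemma integral_pow_mul_sub_one_pow (m n : ℕ) :
    ∫ x in (0 : ℝ)..1, x ^ n * (x - 1) ^ m =
      ∑ i ∈ range (m + 1), (m.choose i : ℝ) * (-1) ^ i / ((n + m + 1 - i : ℕ) : ℝ) := by
  simp_rw [pow_mul_sub_one_pow_eq_sum]
  rw [integral_finsetSum (f := fun i x => (m.choose i : ℝ) * (-1) ^ i * x ^ (n + m - i))
    fun i _ => (continuous_const.mul (continuous_pow _)).intervalIntegrable _ _]
  refine sum_congr rfl fun i hi => ?_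
  have hi : i ≤ m := Nat.lt_succ_iff.mp (mem_range.mp hi)
  rw [integral_const_mul, integral_pow, show n + m + 1 - i = n + m - i + 1 by omega]
  simp [div_eq_mul_inv]

lemma integral_pow_mul_one_sub_pow_pos (m n : ℕ) :
    0 < ∫ x in (0 : ℝ)..1, x ^ n * (1 - x) ^ m := by
  refine intervalIntegral_pos_of_pos_on ?_ (fun x hx => ?_) zero_lt_one
  · exact ((continuous_pow n).mul ((continuous_const.sub continuous_id).pow m)).intervalIntegrable _ _
  · have : 0 < 1 - x := sub_pos.mpr hx.2
    have := hx.1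
    positivity

lemma integral_pow_mul_sub_one_pow_ne_zero (m n : ℕ) :
    ∫ x in (0 : ℝ)..1, x ^ n * (x - 1) ^ m ≠ 0 := by
  have hsign : ∫ x in (0 : ℝ)..1, x ^ n * (x - 1) ^ m =
      (-1) ^ m * ∫ x in (0 : ℝ)..1, x ^ n * (1 - x) ^ m := by
    rw [← integral_const_mul]
    refine integral_congr fun x _ => ?_
    rw [← neg_sub 1 x, neg_pow]
    ring
  rw [hsign]
  exact mul_ne_zero (pow_ne_zero m (neg_ne_zero.mpr one_ne_zero))
    (integral_pow_mul_one_sub_pow_pos m n).ne'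

lemma sum_choose_mul_neg_one_pow_div_ne_zero (m n : ℕ) :
    ∑ i ∈ range (m + 1), (m.choose i : ℂ) * (-1) ^ i / ((n + m + 1 - i : ℕ) : ℂ) ≠ 0 := by
  have h := integral_pow_mul_sub_one_pow_ne_zero m n
  rw [integral_pow_mul_sub_one_pow, ← Complex.ofReal_ne_zero] at h
  simpa using h

theorem stmt_7_general (m n : ℕ) (b c : ℂ) (hb : b ≠ 0)
    (lam : ℂ)
    (hlam : lam = ∑ i ∈ Finset.range (m + 1),
      (m.choose i : ℂ) * (-1) ^ i / ((n + m + 1 - i : ℕ) : ℂ))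
    (P : ℂ → ℂ)
    (hP : P = fun z => (∑ i ∈ Finset.range (m + 1),
      (m.choose i : ℂ) * ((-1) ^ i / ((n + m + 1 - i : ℕ) : ℂ)) *
        z ^ (n + m + 1 - i) * b ^ i) + c) :
    P b - P 0 = b ^ (n + m + 1) * lam ∧ lam ≠ 0 ∧ P b ≠ P 0 := by
  have hP0 : P 0 = c := by
    simp only [hP]
    rw [sum_eq_zero fun i hi => ?_, zero_add]
    have : n + m + 1 - i ≠ 0 := by have := mem_range.mp hi; omega
    simp [zero_pow this]
  have hPb : P b = b ^ (n + m + 1) * lam + c := by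
    simp only [hP, hlam, mul_sum]
    congr 1
    refine sum_congr rfl fun i hi => ?_
    have hi : i ≤ n + m + 1 := by have := mem_range.mp hi; omega
    rw [mul_assoc, pow_sub_mul_pow b hi]
    ring
  have hlam0 : lam ≠ 0 := by rw [hlam]; exact sum_choose_mul_neg_one_pow_div_ne_zero m n
  have hdiff : P b - P 0 = b ^ (n + m + 1) * lam := by rw [hPb, hP0]; ring
  refine ⟨hdiff, hlam0, sub_ne_zero.mp ?_⟩
  rw [hdiff]
  exact mul_ne_zero (pow_ne_zero _ hb) hlam0

theorem stmt_7 (m n : ℕ) (hm : 0 < m) (hn : 0 < n) (b c : ℂ) (hb : b ≠ 0)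
    (lam : ℂ)
    (hlam : lam = ∑ i ∈ Finset.range (m + 1),
      (m.choose i : ℂ) * (-1) ^ i / ((n + m + 1 - i : ℕ) : ℂ))
    (P : ℂ → ℂ)
    (hP : P = fun z => (∑ i ∈ Finset.range (m + 1),
      (m.choose i : ℂ) * ((-1) ^ i / ((n + m + 1 - i : ℕ) : ℂ)) *
        z ^ (n + m + 1 - i) * b ^ i) + c) :
    P b - P 0 = b ^ (n + m + 1) * lam ∧ lam ≠ 0 ∧ P b ≠ P 0 :=
  stmt_7_general m n b c hb lam hlam P hP
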